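/- Let k be a perfect field of prime characteristic p, let R = k[x₁,…,x_d], and let f ∈ R be a nonzero homogeneous polynomial. Then f has level one if and only if there exists an exponent vector α with every entry at most p−1 such that the monomial x^α appears with nonzero coefficient in the expansion of f^{p−1}. -/

import Mathlib

/-!
Level one means exactly that `I_1(f^(p-1)) = R`. If every monomial of `g = f^(p-1)` has an
exponent `≥ p`, then `g` lies in `𝔪^[p]` for the irrelevant ideal `𝔪`, so `I_1(g) ⊆ 𝔪`.
Conversely, for `α` with all entries `< p`, the Cartier-type operator
`Σ c_δ x^δ ↦ Σ c_{pγ+α}^(1/p) x^γ` is `R^p`-semilinear, hence maps `J^[p]` into `J`; when `f` is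
homogeneous and `x^α` occurs in `g`, it sends `g` to a nonzero constant, so any `J` with
`g ∈ J^[p]` is the unit ideal.
-/

open MvPolynomial

/-- `J^[q]`: the ideal generated by the `q`-th powers of the elements of `J`. -/
def bracketPow {R : Type*} [CommRing R] (q : ℕ) (J : Ideal R) : Ideal R :=
  Ideal.span ((fun a => a ^ q) '' (J : Set R))

/-- `I_e(g)` (for the prime `p`): the smallest ideal `J` with `g ∈ J^[p^e]`. -/
def rootIdeal {R : Type*} [CommRing R] (p e : ℕ) (g : R) : Ideal R :=
  sInf {J : Ideal R | g ∈ bracketPow (p ^ e) J}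

/-- `f` has level `e`: `e` is the least integer `≥ 1` such that
`f^(p^e - p) ∈ (I_e(f^(p^e - 1)))^[p^e]`. -/
def HasLevel {R : Type*} [CommRing R] (p : ℕ) (f : R) (e : ℕ) : Prop :=
  IsLeast {e' : ℕ | 1 ≤ e' ∧
    f ^ (p ^ e' - p) ∈ bracketPow (p ^ e') (rootIdeal p e' (f ^ (p ^ e' - 1)))} e

section BracketPow

variable {R : Type*} [CommRing R]

lemma bracketPow_le {q : ℕ} (hq : 0 < q) (J : Ideal R) : bracketPow q J ≤ J := by
  rw [bracketPow, Ideal.span_le]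
  rintro _ ⟨a, ha, rfl⟩
  exact J.pow_mem_of_mem ha q hq

lemma one_mem_bracketPow_iff {q : ℕ} (hq : 0 < q) (J : Ideal R) :
    (1 : R) ∈ bracketPow q J ↔ J = ⊤ := by
  refine ⟨fun h => (Ideal.eq_top_iff_one J).2 (bracketPow_le hq J h), ?_⟩
  rintro rfl
  exact Ideal.subset_span ⟨1, trivial, one_pow q⟩

lemma hasLevel_one_iff {p : ℕ} (hp : 0 < p) (f : R) :
    HasLevel p f 1 ↔ ∀ J : Ideal R, f ^ (p - 1) ∈ bracketPow p J → J = ⊤ := by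
  have hone : f ^ (p ^ 1 - p) ∈ bracketPow (p ^ 1) (rootIdeal p 1 (f ^ (p ^ 1 - 1))) ↔
      ∀ J : Ideal R, f ^ (p - 1) ∈ bracketPow p J → J = ⊤ := by
    rw [pow_one, Nat.sub_self, pow_zero, one_mem_bracketPow_iff hp, rootIdeal, pow_one,
      sInf_eq_top]
    rfl
  exact ⟨fun h => hone.1 h.1.2, fun h => ⟨⟨le_rfl, hone.2 h⟩, fun _ he => he.1⟩⟩

end BracketPow

lemma injective_nsmul_add {σ : Type*} {p : ℕ} (hp : p ≠ 0) (α : σ →₀ ℕ) :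
    Function.Injective fun γ : σ →₀ ℕ => p • γ + α :=
  (add_left_injective α).comp (nsmul_right_injective hp)

section Cartier

variable {σ k : Type*} [CommRing k] {p : ℕ} [ExpChar k p] [PerfectRing k p]

variable (p) in
/-- The Cartier-type operator `Σ c_δ x^δ ↦ Σ c_{pγ+α}^(1/p) x^γ`. -/
noncomputable def cartier (α : σ →₀ ℕ) : MvPolynomial σ k →+ MvPolynomial σ k where
  toFun b := AddMonoidAlgebra.ofCoeff <| Finsupp.mapRange (frobeniusEquiv k p).symm (map_zero _)
    (Finsupp.comapDomain (fun γ => p • γ + α) (AddMonoidAlgebra.coeff b)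
      ((injective_nsmul_add (expChar_pos k p).ne' α).injOn))
  map_zero' := by ext; simp
  map_add' a b := by ext; simp [coeff]

lemma coeff_cartier (α γ : σ →₀ ℕ) (b : MvPolynomial σ k) :
    coeff γ (cartier p α b) = (frobeniusEquiv k p).symm (coeff (p • γ + α) b) :=
  rfl

lemma nsmul_le_nsmul_add_iff {α γ u : σ →₀ ℕ} (hα : ∀ i, α i < p) :
    p • u ≤ p • γ + α ↔ u ≤ γ := by
  simp only [Finsupp.le_def, Finsupp.add_apply, Finsupp.smul_apply, smul_eq_mul]
  refine forall_congr' fun i => ⟨fun h => ?_, fun h => ?_⟩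
  · by_contra! hc
    nlinarith [hα i]
  · nlinarith

lemma nsmul_add_tsub_nsmul {α γ u : σ →₀ ℕ} (h : u ≤ γ) :
    p • γ + α - p • u = p • (γ - u) + α := by
  rw [← tsub_add_eq_add_tsub (nsmul_le_nsmul_right h p)]
  ext i
  simp [Nat.mul_sub]

lemma frobeniusEquiv_symm_pow_mul (c x : k) :
    (frobeniusEquiv k p).symm (c ^ p * x) = c * (frobeniusEquiv k p).symm x := by
  rw [map_mul, frobeniusEquiv_symm_pow]

lemma cartier_pow_mul {α : σ →₀ ℕ} (hα : ∀ i, α i < p) (h b : MvPolynomial σ k) :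
    cartier p α (h ^ p * b) = h * cartier p α b := by
  induction h using MvPolynomial.induction_on' with
  | monomial u a =>
    ext γ
    rw [coeff_cartier, monomial_pow, coeff_monomial_mul', coeff_monomial_mul']
    by_cases hle : u ≤ γ
    · rw [if_pos ((nsmul_le_nsmul_add_iff hα).2 hle), if_pos hle, nsmul_add_tsub_nsmul hle,
        frobeniusEquiv_symm_pow_mul, coeff_cartier]
    · rw [if_neg (mt (nsmul_le_nsmul_add_iff hα).1 hle), if_neg hle, map_zero]
  | add q r hq hr =>
    rw [add_pow_expChar, add_mul, map_add, hq, hr, add_mul]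

lemma cartier_mem_of_mem_bracketPow {α : σ →₀ ℕ} (hα : ∀ i, α i < p)
    {J : Ideal (MvPolynomial σ k)} {g : MvPolynomial σ k} (hg : g ∈ bracketPow p J) :
    cartier p α g ∈ J := by
  suffices ∀ r, cartier p α (r * g) ∈ J by simpa using this 1
  induction hg using Submodule.span_induction with
  | mem _ hx =>
    obtain ⟨a, ha, rfl⟩ := hx
    intro r
    rw [mul_comm, cartier_pow_mul hα]
    exact J.mul_mem_right _ ha
  | zero => simp
  | add x y _ _ hx hy => intro r; rw [mul_add, map_add]; exact J.add_mem (hx r) (hy r)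
  | smul s x _ hx => intro r; rw [smul_eq_mul, ← mul_assoc]; exact hx (r * s)

/-- On a homogeneous polynomial whose support contains `α`, the degree count
`deg (p • γ + α) = p * deg γ + deg α` leaves only `γ = 0`. -/
lemma cartier_eq_C_of_isHomogeneous {g : MvPolynomial σ k} {n : ℕ} (hg : g.IsHomogeneous n)
    {α : σ →₀ ℕ} (hα : coeff α g ≠ 0) :
    cartier p α g = C ((frobeniusEquiv k p).symm (coeff α g)) := by
  classical
  have hdegα : α.degree = n := by
    by_contra h
    exact hα (hg.coeff_eq_zero h)
  ext γ
  rw [coeff_cartier, coeff_C]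
  split_ifs with hγ
  · rw [← hγ, smul_zero, zero_add]
  · have hdeg : (p • γ + α).degree ≠ n := by
      rw [← hdegα, map_add, map_nsmul, ne_eq, add_eq_right,
        smul_eq_zero, Finsupp.degree_eq_zero_iff, not_or]
      exact ⟨(expChar_pos k p).ne', Ne.symm hγ⟩
    rw [hg.coeff_eq_zero hdeg, map_zero]

end Cartier

lemma mem_bracketPow_ker_constantCoeff {σ k : Type*} [CommRing k] {q : ℕ}
    {g : MvPolynomial σ k} (hg : ∀ δ ∈ g.support, ∃ i, q ≤ δ i) :
    g ∈ bracketPow q (RingHom.ker (constantCoeff (σ := σ) (R := k))) := by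
  rw [← support_sum_monomial_coeff g]
  refine Ideal.sum_mem _ fun δ hδ => ?_
  obtain ⟨i, hi⟩ := hg δ hδ
  have hsplit :
      monomial δ (coeff δ g) = X i ^ q * monomial (δ - Finsupp.single i q) (coeff δ g) := by
    rw [X_pow_eq_monomial, monomial_mul, one_mul,
      add_tsub_cancel_of_le (Finsupp.single_le_iff.2 hi)]
  rw [hsplit]
  exact Ideal.mul_mem_right _ _ (Ideal.subset_span ⟨X i, constantCoeff_X k i, rfl⟩)

theorem stmt_11_general (p : ℕ) [Fact p.Prime] (k : Type*) [Field k] [CharP k p] [PerfectField k]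
    (d : ℕ) (f : MvPolynomial (Fin d) k)
    (m : ℕ) (hhom : f.IsHomogeneous m) :
    HasLevel p f 1 ↔
      ∃ α : Fin d →₀ ℕ, (∀ i, α i ≤ p - 1) ∧ coeff α (f ^ (p - 1)) ≠ 0 := by
  have hp : 0 < p := (Fact.out : p.Prime).pos
  rw [hasLevel_one_iff hp]
  constructor
  · intro h
    by_contra! hsmall
    refine RingHom.ker_ne_top (constantCoeff (σ := Fin d) (R := k)) (h _ ?_)
    refine mem_bracketPow_ker_constantCoeff fun δ hδ => ?_
    by_contra! hlt
    exact (mem_support_iff.1 hδ) (hsmall δ fun i => Nat.le_sub_one_of_lt (hlt i))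
  · rintro ⟨α, hα, hcoeff⟩ J hJ
    have hαp : ∀ i, α i < p := fun i => Nat.lt_of_le_sub_one hp (hα i)
    have hmem := cartier_mem_of_mem_bracketPow hαp hJ
    rw [cartier_eq_C_of_isHomogeneous (hhom.pow (p - 1)) hcoeff] at hmem
    refine J.eq_top_of_isUnit_mem hmem ((IsUnit.mk0 _ ?_).map C)
    simpa using hcoeff

/-- A nonzero homogeneous polynomial `f` has level one if and only if some monomial `x^α`
with all exponents at most `p - 1` occurs with nonzero coefficient in `f^(p-1)`. -/
theorem stmt_11 (p : ℕ) [Fact p.Prime] (k : Type*) [Field k] [CharP k p] [PerfectField k]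
    (d : ℕ) (f : MvPolynomial (Fin d) k) (hf : f ≠ 0)
    (m : ℕ) (hhom : f.IsHomogeneous m) :
    HasLevel p f 1 ↔
      ∃ α : Fin d →₀ ℕ, (∀ i, α i ≤ p - 1) ∧ coeff α (f ^ (p - 1)) ≠ 0 :=
  stmt_11_general p k d f m hhom
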